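/- Let Q = [-1/2,1/2]^d × [-1/2,1/2]^d ⊂ ℝ^d × ℝ^d and let c̃(x,y) = x·y (the Euclidean dot product). Let 0 < r < R be real numbers and let 0 < δ < min(r, R−r). Then there exists a measurable function h^δ : Q → ℝ with r−δ ≤ h^δ(x,y) ≤ r+δ for all (x,y) ∈ Q (in particular 0 ≤ h^δ ≤ R), whose marginals equal those of the constant function r (i.e. ∫_{[-1/2,1/2]^d} h^δ(x,y) dy = r for a.e. x and ∫_{[-1/2,1/2]^d} h^δ(x,y) dx = r for a.e. y), and such that ∫_Q x·y · h^δ(x,y) dx dy < ∫_Q x·y · r dx dy. In other words, a constant density strictly between 0 and the capacity bound is never optimal for the cost x·y among densities on Q with the same (constant) marginals that are bounded above by R. -/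

import Mathlib

open MeasureTheory Filter Set Topology

noncomputable section

/-- The cube `[-1/2, 1/2]^d ⊆ ℝ^d`. -/
def cube (d : ℕ) : Set (Fin d → ℝ) :=
  Set.Icc (fun _ => -(1/2 : ℝ)) (fun _ => (1/2 : ℝ))

/-!
Tilt the constant density along the saddle `x₀ y₀` of one coordinate: `h = r - 4δ x₀ y₀`.
As `|x₀ y₀| ≤ 1/4` on `Q`, `h` stays in `[r - δ, r + δ]`; as `x₀` has mean zero on the cube,
the marginals of `h` are still `r`. By Fubini, the cost of `h` is that of `r` minus
`4δ ∑ⱼ (∫ xⱼ x₀)²`, and the `j = 0` term alone is `(1/12)² > 0`.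
-/

theorem integral_prod_sum_mul {α β ι : Type*} [MeasurableSpace α] [MeasurableSpace β]
    {μ : Measure α} {ν : Measure β} [SFinite μ] [SFinite ν] (s : Finset ι) {f : ι → α → ℝ}
    {g : ι → β → ℝ} (hf : ∀ i ∈ s, Integrable (f i) μ) (hg : ∀ i ∈ s, Integrable (g i) ν) :
    ∫ p, ∑ i ∈ s, f i p.1 * g i p.2 ∂μ.prod ν = ∑ i ∈ s, (∫ x, f i x ∂μ) * ∫ y, g i y ∂ν := by
  rw [integral_finsetSum s fun i hi => (hf i hi).mul_prod (hg i hi)]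
  exact Finset.sum_congr rfl fun i _ => integral_prod_mul (f i) (g i)

theorem integral_pi_comp_eval {ι : Type*} [Fintype ι] {α : ι → Type*}
    [∀ i, MeasurableSpace (α i)] (μ : ∀ i, Measure (α i)) [∀ i, IsProbabilityMeasure (μ i)]
    (i : ι) {f : α i → ℝ} (hf : Measurable f) :
    ∫ x, f (x i) ∂Measure.pi μ = ∫ t, f t ∂μ i := by
  rw [← (measurePreserving_eval μ i).map_eq,
    integral_map (measurable_pi_apply i).aemeasurable hf.aestronglyMeasurable]

theorem cube_eq_pi (d : ℕ) : cube d = univ.pi fun _ : Fin d => Icc (-(1/2 : ℝ)) (1/2) :=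
  (pi_univ_Icc _ _).symm

theorem isCompact_cube (d : ℕ) : IsCompact (cube d) := isCompact_Icc

theorem integrableOn_cube_of_continuous {d : ℕ} {f : (Fin d → ℝ) → ℝ} (hf : Continuous f) :
    IntegrableOn f (cube d) :=
  hf.continuousOn.integrableOn_compact (isCompact_cube d)

theorem volume_restrict_cube (d : ℕ) :
    volume.restrict (cube d) =
      Measure.pi fun _ : Fin d => volume.restrict (Icc (-(1/2 : ℝ)) (1/2)) := by
  rw [cube_eq_pi, ← Measure.restrict_pi_pi, volume_pi]

instance : IsProbabilityMeasure (volume.restrict (Icc (-(1/2 : ℝ)) (1/2))) :=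
  ⟨by simp [Real.volume_Icc]; norm_num⟩

instance (d : ℕ) : IsProbabilityMeasure (volume.restrict (cube d)) := by
  rw [volume_restrict_cube]; infer_instance

theorem integral_cube_comp_eval (d : ℕ) (i : Fin d) {f : ℝ → ℝ} (hf : Measurable f) :
    ∫ x in cube d, f (x i) = ∫ t in Icc (-(1/2 : ℝ)) (1/2), f t := by
  rw [volume_restrict_cube]
  exact integral_pi_comp_eval _ i hf

theorem integral_cube_eval (d : ℕ) (i : Fin d) : ∫ x in cube d, x i = 0 := by
  rw [integral_cube_comp_eval d i (f := fun t => t) measurable_id, integral_Icc_eq_integral_Ioc,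
    ← intervalIntegral.integral_of_le (by norm_num), integral_id]
  norm_num

theorem integral_cube_eval_sq (d : ℕ) (i : Fin d) : ∫ x in cube d, x i ^ 2 = 1 / 12 := by
  rw [integral_cube_comp_eval d i (f := fun t => t ^ 2) (by fun_prop),
    integral_Icc_eq_integral_Ioc, ← intervalIntegral.integral_of_le (by norm_num), integral_pow]
  norm_num

theorem setIntegral_cube_prod_cube {d : ℕ} (F : (Fin d → ℝ) × (Fin d → ℝ) → ℝ) :
    ∫ p in cube d ×ˢ cube d, F p =
      ∫ p, F p ∂(volume.restrict (cube d)).prod (volume.restrict (cube d)) := by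
  rw [Measure.volume_eq_prod, Measure.prod_restrict]

theorem sum_sq_integral_cube_mul_pos {d : ℕ} (i : Fin d) :
    0 < ∑ j, (∫ x in cube d, x j * x i) ^ 2 :=
  calc (0 : ℝ) < (∫ x in cube d, x i * x i) ^ 2 := by
        simp_rw [← sq, integral_cube_eval_sq]; norm_num
    _ ≤ ∑ j, (∫ x in cube d, x j * x i) ^ 2 :=
        Finset.single_le_sum (f := fun j => (∫ x in cube d, x j * x i) ^ 2)
          (fun j _ => sq_nonneg _) (Finset.mem_univ i)

def tiltedDensity {d : ℕ} (i : Fin d) (r δ : ℝ) (p : (Fin d → ℝ) × (Fin d → ℝ)) : ℝ :=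
  r - 4 * δ * (p.1 i * p.2 i)

section tiltedDensity

variable {d : ℕ} (i : Fin d) (r δ : ℝ)

theorem measurable_tiltedDensity : Measurable (tiltedDensity i r δ) := by
  unfold tiltedDensity; fun_prop

theorem tiltedDensity_mem_Icc (hδ : 0 ≤ δ) {p : (Fin d → ℝ) × (Fin d → ℝ)}
    (hp : p ∈ cube d ×ˢ cube d) : tiltedDensity i r δ p ∈ Icc (r - δ) (r + δ) := by
  have hx : |p.1 i| ≤ 1 / 2 := abs_le.2 ⟨hp.1.1 i, hp.1.2 i⟩
  have hy : |p.2 i| ≤ 1 / 2 := abs_le.2 ⟨hp.2.1 i, hp.2.2 i⟩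
  have hxy : |p.1 i * p.2 i| ≤ 1 / 4 := by
    rw [abs_mul]; nlinarith [abs_nonneg (p.1 i), abs_nonneg (p.2 i)]
  obtain ⟨hlo, hhi⟩ := abs_le.1 hxy
  unfold tiltedDensity
  constructor <;> nlinarith

theorem integral_tiltedDensity_left (x : Fin d → ℝ) :
    ∫ y in cube d, tiltedDensity i r δ (x, y) = r := by
  unfold tiltedDensity
  rw [integral_sub (integrable_const r) (integrableOn_cube_of_continuous (by fun_prop)),
    integral_const_mul, integral_const_mul, integral_cube_eval]
  simp

theorem integral_tiltedDensity_right (y : Fin d → ℝ) :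
    ∫ x in cube d, tiltedDensity i r δ (x, y) = r := by
  unfold tiltedDensity
  simp_rw [mul_comm _ (y i)]
  rw [integral_sub (integrable_const r) (integrableOn_cube_of_continuous (by fun_prop)),
    integral_const_mul, integral_const_mul, integral_cube_eval]
  simp

theorem integral_cost_mul_tiltedDensity :
    ∫ p in cube d ×ˢ cube d, (∑ j, p.1 j * p.2 j) * tiltedDensity i r δ p =
      (∫ p in cube d ×ˢ cube d, (∑ j, p.1 j * p.2 j) * r) -
        4 * δ * ∑ j, (∫ x in cube d, x j * x i) ^ 2 := by
  have hQ : IsCompact (cube d ×ˢ cube d) := (isCompact_cube d).prod (isCompact_cube d)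
  have hsplit : ∀ p : (Fin d → ℝ) × (Fin d → ℝ),
      (∑ j, p.1 j * p.2 j) * tiltedDensity i r δ p =
        (∑ j, p.1 j * p.2 j) * r - 4 * δ * ∑ j, (p.1 j * p.1 i) * (p.2 j * p.2 i) := by
    intro p
    simp only [tiltedDensity, Finset.sum_mul, Finset.mul_sum]
    rw [← Finset.sum_sub_distrib]
    exact Finset.sum_congr rfl fun j _ => by ring
  simp_rw [hsplit]
  rw [integral_sub ((Continuous.continuousOn (by fun_prop)).integrableOn_compact hQ)
      ((Continuous.continuousOn (by fun_prop)).integrableOn_compact hQ),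
    integral_const_mul,
    setIntegral_cube_prod_cube fun p => ∑ j, (p.1 j * p.1 i) * (p.2 j * p.2 i),
    integral_prod_sum_mul (f := fun j x => x j * x i) (g := fun j y => y j * y i) _
      (fun j _ => integrableOn_cube_of_continuous (by fun_prop))
      (fun j _ => integrableOn_cube_of_continuous (by fun_prop))]
  simp_rw [sq]

end tiltedDensity

theorem constant_density_not_optimal_general (d : ℕ) (hd : 0 < d) (r δ : ℝ) (hδ_pos : 0 < δ) :
    ∃ hδfun : ((Fin d → ℝ) × (Fin d → ℝ)) → ℝ,
      Measurable hδfun ∧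
      (∀ p ∈ cube d ×ˢ cube d, r - δ ≤ hδfun p ∧ hδfun p ≤ r + δ) ∧
      (∀ᵐ x ∂volume.restrict (cube d), (∫ y in cube d, hδfun (x, y)) = r) ∧
      (∀ᵐ y ∂volume.restrict (cube d), (∫ x in cube d, hδfun (x, y)) = r) ∧
      (∫ p in cube d ×ˢ cube d, (∑ i, p.1 i * p.2 i) * hδfun p) <
        ∫ p in cube d ×ˢ cube d, (∑ i, p.1 i * p.2 i) * r := by
  let i₀ : Fin d := ⟨0, hd⟩
  refine ⟨tiltedDensity i₀ r δ, measurable_tiltedDensity i₀ r δ,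
    fun p hp => tiltedDensity_mem_Icc i₀ r δ hδ_pos.le hp,
    .of_forall (integral_tiltedDensity_left i₀ r δ),
    .of_forall (integral_tiltedDensity_right i₀ r δ), ?_⟩
  rw [integral_cost_mul_tiltedDensity]
  exact sub_lt_self _ (mul_pos (by positivity) (sum_sq_integral_cube_mul_pos i₀))

/-- **A constant density strictly between 0 and the capacity bound is never optimal for the
cost `x·y`** (Lemma 6.1): for `0 < r < R` and `0 < δ < min(r, R-r)` there is a density `h^δ`
on `Q = [-1/2,1/2]^d × [-1/2,1/2]^d` with values in `[r-δ, r+δ]`, whose marginals are the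
constant `r`, and with strictly smaller cost `∫_Q x·y h^δ < ∫_Q x·y r`. -/
theorem constant_density_not_optimal (d : ℕ) (hd : 0 < d) (r R δ : ℝ)
    (hr : 0 < r) (hrR : r < R) (hδ_pos : 0 < δ) (hδ : δ < min r (R - r)) :
    ∃ hδfun : ((Fin d → ℝ) × (Fin d → ℝ)) → ℝ,
      Measurable hδfun ∧
      (∀ p ∈ cube d ×ˢ cube d, r - δ ≤ hδfun p ∧ hδfun p ≤ r + δ) ∧
      (∀ᵐ x ∂volume.restrict (cube d), (∫ y in cube d, hδfun (x, y)) = r) ∧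
      (∀ᵐ y ∂volume.restrict (cube d), (∫ x in cube d, hδfun (x, y)) = r) ∧
      (∫ p in cube d ×ˢ cube d, (∑ i, p.1 i * p.2 i) * hδfun p) <
        ∫ p in cube d ×ˢ cube d, (∑ i, p.1 i * p.2 i) * r :=
  constant_density_not_optimal_general d hd r δ hδ_pos
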